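/- Let ρ and σ be two well agreeing near weights on R and let n ∈ ℕ. If y_H(n) > 0, then x_H(y_H(n)) = n and n > 0. -/

import Mathlib

structure NearWeight (F R : Type*) [Field F] [CommRing R] [Algebra F R] where
  w : R → WithBot ℕ
  N0 : ∀ f : R, w f = ⊥ ↔ f = 0
  N1 : ∀ (c : F) (f : R), c ≠ 0 → w (c • f) = w f
  N2 : ∀ f g : R, w (f + g) ≤ max (w f) (w g)
  N3 : ∀ f g h : R, w f < w g → w (f * h) ≤ w (g * h)
  N3' : ∀ f g h : R, w f < w g → w 1 < w h → w (f * h) < w (g * h)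
  N4 : ∀ f g : R, w 1 < w f → w 1 < w g → w f = w g →
      ∃ c : F, c ≠ 0 ∧ w (f - c • g) < w f
  N5 : ∀ f g : R, w (f * g) ≤ w f + w g
  N5' : ∀ f g : R, w 1 < w f → w 1 < w g → w (f * g) = w f + w g
  norm0 : ∀ f : R, f ≠ 0 → w f ≤ w 1 → w f = 0
  normgcd : ∀ d : ℕ, (∀ f : R, w 1 < w f → ∃ k : ℕ, w f = ((d * k : ℕ) : WithBot ℕ)) → d = 1

namespace NearWeight

variable {F R : Type*} [Field F] [CommRing R] [Algebra F R]

def U (ρ : NearWeight F R) : Set R := {r | ρ.w r ≤ ρ.w 1}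

def M (ρ : NearWeight F R) : Set R := {r | ρ.w 1 < ρ.w r}

def nval (ρ : NearWeight F R) (f : R) : ℕ := WithBot.unbotD 0 (ρ.w f)

def Hset (ρ σ : NearWeight F R) (S : Set R) : Set (ℕ × ℕ) :=
  {p | ∃ f ∈ S, f ≠ 0 ∧ (ρ.nval f, σ.nval f) = p}

def WellAgreeing (ρ σ : NearWeight F R) : Prop :=
  (Hset ρ σ Set.univ)ᶜ.Finite ∧ ρ.U ∩ σ.U = Set.range (algebraMap F R)

noncomputable def xH (ρ σ : NearWeight F R) (n : ℕ) : ℕ :=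
  sInf {m | (m, n) ∈ Hset ρ σ Set.univ}

noncomputable def yH (ρ σ : NearWeight F R) (n : ℕ) : ℕ :=
  sInf {m | (n, m) ∈ Hset ρ σ Set.univ}

def lub (a b : ℕ × ℕ) : ℕ × ℕ := (max a.1 b.1, max a.2 b.2)

noncomputable def Gamma (ρ σ : NearWeight F R) : Set (ℕ × ℕ) :=
  {p | ∃ m : ℕ, p = (m, yH ρ σ m)} ∪ {p | ∃ n : ℕ, p = (xH ρ σ n, n)}

def Hbarx (ρ σ : NearWeight F R) : Set ℕ := {m | (m, 0) ∈ Hset ρ σ Set.univ}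

def Hbary (ρ σ : NearWeight F R) : Set ℕ := {n | (0, n) ∈ Hset ρ σ Set.univ}

noncomputable def GammaTilde (ρ σ : NearWeight F R) : Set (ℕ × ℕ) :=
  {p | ∃ m : ℕ, m ∉ Hbarx ρ σ ∧ p = (m, yH ρ σ m)}

def Delta (p : ℕ × ℕ) : Set (ℕ × ℕ) :=
  {q | (q.1 = p.1 ∧ q.2 < p.2) ∨ (q.2 = p.2 ∧ q.1 < p.1)}

noncomputable def tw (ρ : NearWeight F R) (f : R) : ℤ :=
  sInf {z : ℤ | ∃ g ∈ ρ.M, z = (ρ.nval (f * g) : ℤ) - (ρ.nval g : ℤ)}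

end NearWeight

/-!
Let `b = y_H(n) > 0` and suppose some `f` has valuation pair `(m, b)` with `m < n`, while `g`
has pair `(n, b)`. Axiom (N4) for `σ` gives `c` with `σ(f - c g) < b`, and since `ρ(f) < ρ(c g)`
the ultrametric inequality gives `ρ(f - c g) = n`; this contradicts the minimality of `b`.
Positivity of `n` holds because `1` realises `(0, 0)`, so `y_H(0) = 0`.
-/

variable {F R : Type*} [Field F] [CommRing R] [Algebra F R]

namespace NearWeight

variable (ρ σ : NearWeight F R)

theorem w_eq_nval {f : R} (hf : f ≠ 0) : ρ.w f = ρ.nval f := by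
  cases h : ρ.w f with
  | bot => exact absurd ((ρ.N0 f).mp h) hf
  | coe k => simp [nval, h]; rfl

theorem w_one [Nontrivial R] : ρ.w 1 = 0 :=
  ρ.norm0 1 one_ne_zero le_rfl

theorem nval_one [Nontrivial R] : ρ.nval 1 = 0 := by
  simp [nval, w_one]

theorem w_neg (f : R) : ρ.w (-f) = ρ.w f := by
  rw [← neg_one_smul F f, ρ.N1 _ _ (neg_ne_zero.mpr one_ne_zero)]

theorem w_sub_of_lt {f g : R} (h : ρ.w f < ρ.w g) : ρ.w (f - g) = ρ.w g := by
  apply le_antisymm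
  · calc ρ.w (f - g) ≤ max (ρ.w f) (ρ.w (-g)) := sub_eq_add_neg f g ▸ ρ.N2 f (-g)
      _ = ρ.w g := by rw [w_neg, max_eq_right h.le]
  · have hg : ρ.w g ≤ max (ρ.w f) (ρ.w (-(f - g))) := by
      simpa [sub_eq_add_neg] using ρ.N2 f (-(f - g))
    rw [w_neg] at hg
    exact (le_max_iff.mp hg).resolve_left h.not_ge

theorem mem_Hset_univ_iff {p : ℕ × ℕ} :
    p ∈ Hset ρ σ Set.univ ↔ ∃ f : R, f ≠ 0 ∧ ρ.nval f = p.1 ∧ σ.nval f = p.2 := by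
  simp [Hset, Prod.ext_iff]

theorem zero_zero_mem_Hset [Nontrivial R] : ((0, 0) : ℕ × ℕ) ∈ Hset ρ σ Set.univ :=
  (mem_Hset_univ_iff ρ σ).mpr ⟨1, one_ne_zero, nval_one ρ, nval_one σ⟩

theorem nontrivial_of_mem_Hset {p : ℕ × ℕ} (hp : p ∈ Hset ρ σ Set.univ) : Nontrivial R := by
  obtain ⟨f, hf, -⟩ := (mem_Hset_univ_iff ρ σ).mp hp
  exact ⟨⟨f, 0, hf⟩⟩

theorem exists_mem_Hset_snd_lt {m n b : ℕ} (hmn : m < n) (hb : 0 < b)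
    (hm : (m, b) ∈ Hset ρ σ Set.univ) (hn : (n, b) ∈ Hset ρ σ Set.univ) :
    ∃ b' < b, (n, b') ∈ Hset ρ σ Set.univ := by
  obtain ⟨f, hf, hfρ, hfσ⟩ := (mem_Hset_univ_iff ρ σ).mp hm
  obtain ⟨g, hg, hgρ, hgσ⟩ := (mem_Hset_univ_iff ρ σ).mp hn
  have := nontrivial_of_mem_Hset ρ σ hm
  have hwf : σ.w f = b := by rw [w_eq_nval σ hf, hfσ]
  have hwg : σ.w g = b := by rw [w_eq_nval σ hg, hgσ]
  have hb' : σ.w 1 < (b : WithBot ℕ) := by rw [w_one]; exact_mod_cast hb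
  obtain ⟨c, hc, hlt⟩ := σ.N4 f g (hwf ▸ hb') (hwg ▸ hb') (hwf.trans hwg.symm)
  have hρlt : ρ.w f < ρ.w (c • g) := by
    rw [ρ.N1 c g hc, w_eq_nval ρ hf, w_eq_nval ρ hg, hfρ, hgρ]
    exact_mod_cast hmn
  have hρ : ρ.w (f - c • g) = n := by
    rw [w_sub_of_lt ρ hρlt, ρ.N1 c g hc, w_eq_nval ρ hg, hgρ]
  have hne : f - c • g ≠ 0 := fun h => by simp [h, (ρ.N0 0).mpr rfl] at hρ
  refine ⟨σ.nval (f - c • g), ?_, (mem_Hset_univ_iff ρ σ).mpr ⟨_, hne, ?_, rfl⟩⟩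
  · rw [w_eq_nval σ hne, hwf] at hlt
    exact_mod_cast hlt
  · rw [w_eq_nval ρ hne] at hρ
    exact_mod_cast hρ

theorem mem_Hset_yH {n : ℕ} (h : 0 < yH ρ σ n) : (n, yH ρ σ n) ∈ Hset ρ σ Set.univ :=
  Nat.sInf_mem (Nat.nonempty_of_pos_sInf h)

theorem yH_zero [Nontrivial R] : yH ρ σ 0 = 0 :=
  Nat.sInf_eq_zero.mpr (Or.inl (zero_zero_mem_Hset ρ σ))

theorem mem_Hset_xH {n : ℕ} (h : {m | (m, n) ∈ Hset ρ σ Set.univ}.Nonempty) :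
    (xH ρ σ n, n) ∈ Hset ρ σ Set.univ :=
  Nat.sInf_mem h

end NearWeight

theorem stmt3_general
    (ρ σ : NearWeight F R)
    (n : ℕ) (hy : 0 < NearWeight.yH ρ σ n) :
    NearWeight.xH ρ σ (NearWeight.yH ρ σ n) = n ∧ 0 < n := by
  set b := ρ.yH σ n
  have hb : (n, b) ∈ ρ.Hset σ Set.univ := ρ.mem_Hset_yH σ hy
  have := ρ.nontrivial_of_mem_Hset σ hb
  have hn : 0 < n := Nat.pos_of_ne_zero fun h0 => by simp [b, h0, NearWeight.yH_zero] at hy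
  refine ⟨(Nat.sInf_le hb).eq_or_lt.resolve_right fun hlt => ?_, hn⟩
  obtain ⟨b', hb'b, hb'⟩ := ρ.exists_mem_Hset_snd_lt σ hlt hy (ρ.mem_Hset_xH σ ⟨n, hb⟩) hb
  exact (Nat.sInf_le hb').not_gt hb'b

theorem stmt3
    (hinj : Function.Injective (algebraMap F R))
    (hsur : ¬ Function.Surjective (algebraMap F R))
    (ρ σ : NearWeight F R) (hwa : NearWeight.WellAgreeing ρ σ)
    (n : ℕ) (hy : 0 < NearWeight.yH ρ σ n) :
    NearWeight.xH ρ σ (NearWeight.yH ρ σ n) = n ∧ 0 < n :=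
  stmt3_general ρ σ n hy
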